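/- For m > 0 and ℓ > 0 with ℓ < 2m, the surface gravity of the Simpson–Visser spacetime, κ = (1/2)f'(r_H) evaluated at r_H = √((2m)²-ℓ²) where f(r) = 1 - 2m/√(r²+ℓ²), equals √((2m)²-ℓ²)/(8m²). -/

import Mathlib

/-! At the horizon `√(r_H² + ℓ²) = 2m`, so `f'(r) = 2m r / (r² + ℓ²)^{3/2}` gives
`κ = ½ · 2m r_H / (2m)³ = r_H / (8m²)`. -/

open Real

theorem hasDerivAt_one_sub_div_sqrt_sq_add {a b r : ℝ} (hr : 0 < r ^ 2 + b) :
    HasDerivAt (fun x : ℝ => 1 - a / √(x ^ 2 + b)) (a * r / √(r ^ 2 + b) ^ 3) r := by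
  have hsq : HasDerivAt (fun x : ℝ => x ^ 2 + b) (2 * r) r := by
    simpa using (hasDerivAt_pow 2 r).add_const b
  have hsqrt := hsq.sqrt hr.ne'
  have hne : √(r ^ 2 + b) ≠ 0 := (sqrt_pos.mpr hr).ne'
  refine (((hasDerivAt_const r a).div hsqrt hne).const_sub 1).congr_deriv ?_
  field_simp
  ring

theorem sqrt_sq_sqrt_sub_sq_add_sq {c ℓ : ℝ} (hc : 0 ≤ c) (hℓ : ℓ ^ 2 ≤ c ^ 2) :
    √(√(c ^ 2 - ℓ ^ 2) ^ 2 + ℓ ^ 2) = c := by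
  rw [sq_sqrt (sub_nonneg.mpr hℓ), sub_add_cancel, sqrt_sq hc]

/-- The surface gravity `κ = f'(r_H)/2` of the Simpson–Visser spacetime,
with `f r = 1 - 2m/√(r²+ℓ²)` and `r_H = √((2m)²-ℓ²)`, equals `√((2m)²-ℓ²)/(8m²)`. -/
theorem sv_surface_gravity (m ℓ : ℝ) (hm : 0 < m) (hℓ : 0 < ℓ) (h : ℓ < 2*m) :
    (1/2) * deriv (fun r : ℝ => 1 - 2*m / Real.sqrt (r^2 + ℓ^2))
        (Real.sqrt ((2*m)^2 - ℓ^2))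
      = Real.sqrt ((2*m)^2 - ℓ^2) / (8*m^2) := by
  have hhorizon : √(√((2 * m) ^ 2 - ℓ ^ 2) ^ 2 + ℓ ^ 2) = 2 * m :=
    sqrt_sq_sqrt_sub_sq_add_sq (by positivity) (by nlinarith)
  have hpos : 0 < √((2 * m) ^ 2 - ℓ ^ 2) ^ 2 + ℓ ^ 2 :=
    sqrt_pos.mp (hhorizon ▸ by positivity)
  rw [(hasDerivAt_one_sub_div_sqrt_sq_add hpos).deriv, hhorizon]
  field_simp
  ring
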